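/- arXiv:2412.05030 — 3 statements merged into one kernel-verified Lean document; each statement's English description precedes it below -/
import Mathlib

section
/- Let φ and ψ be scale functions (satisfying LU conditions with positive exponents). Then ∫₀¹ φ(s)/(s ψ(s)) ds < ∞ if and only if ∫₀¹ ds/ψ(φ⁻¹(s)) < ∞. -/
open Real Set MeasureTheory Filter Topology
open scoped ENNReal Function

/-! Choose `q < 1` with `φ (q r) ≤ φ r / 2`, which the lower `LU` bound of `φ` allows since
`β₁ > 0`, and cut `(0, 1]` at the points `qⁿ`. On `(qⁿ⁺¹, qⁿ]` the upper `LU` bounds make `φ`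
and `ψ` comparable to their values at `qⁿ`, so the first integral over this piece is comparable
to `φ (qⁿ) / ψ (qⁿ)`. The images `(φ (qⁿ⁺¹), φ (qⁿ)]` also cut `(0, 1]`; each has length between
`φ (qⁿ) / 2` and `φ (qⁿ)`, and on it `φ⁻¹` stays in `(qⁿ⁺¹, qⁿ]`, so the second integral over it
is comparable to the same quantity. Both integrals are therefore finite exactly when
`∑ φ (qⁿ) / ψ (qⁿ)` converges. -/

/-- A scale function satisfying `LU(α₁, α₂)`. -/
def LU (α₁ α₂ : ℝ) (ψ : ℝ → ℝ) : Prop :=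
  ContinuousOn ψ (Ici 0) ∧ StrictMonoOn ψ (Ici 0) ∧ ψ 0 = 0 ∧ ψ 1 = 1 ∧
    ∃ C : ℝ, 1 ≤ C ∧ ∀ r R : ℝ, 0 < r → r ≤ R →
      C⁻¹ * (R / r) ^ α₁ ≤ ψ R / ψ r ∧ ψ R / ψ r ≤ C * (R / r) ^ α₂

lemma iUnion_Ioc_succ_eq_Ioc_of_antitone {a : ℕ → ℝ} (ha : Antitone a)
    (ha0 : Tendsto a atTop (𝓝 0)) : ⋃ n, Ioc (a (n + 1)) (a n) = Ioc 0 (a 0) := by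
  ext x
  simp only [mem_iUnion, mem_Ioc]
  constructor
  · rintro ⟨n, hlt, hle⟩
    exact ⟨(ha.le_of_tendsto ha0 _).trans_lt hlt, hle.trans (ha n.zero_le)⟩
  · rintro ⟨hx0, hx1⟩
    classical
    have hex : ∃ n, a (n + 1) < x :=
      ((ha0.comp (tendsto_add_atTop_nat 1)).eventually (gt_mem_nhds hx0)).exists
    refine ⟨Nat.find hex, Nat.find_spec hex, ?_⟩
    rcases hfind : Nat.find hex with _ | m
    · exact hx1
    · exact not_lt.1 (Nat.find_min hex (hfind ▸ m.lt_succ_self))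

lemma ofReal_mul_sub_le_setLIntegral_Ioc {f : ℝ → ℝ} {a b m : ℝ} (hm : 0 ≤ m)
    (hf : ∀ x ∈ Ioc a b, m ≤ f x) :
    ENNReal.ofReal (m * (b - a)) ≤ ∫⁻ x in Ioc a b, ENNReal.ofReal (f x) :=
  calc ENNReal.ofReal (m * (b - a)) = ∫⁻ _ in Ioc a b, ENNReal.ofReal m := by
        rw [setLIntegral_const, Real.volume_Ioc, ENNReal.ofReal_mul hm]
    _ ≤ _ := setLIntegral_mono' measurableSet_Ioc fun x hx => ENNReal.ofReal_le_ofReal (hf x hx)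

lemma setLIntegral_Ioc_le_ofReal_mul_sub {f : ℝ → ℝ} {a b M : ℝ} (hM : 0 ≤ M)
    (hf : ∀ x ∈ Ioc a b, f x ≤ M) :
    ∫⁻ x in Ioc a b, ENNReal.ofReal (f x) ≤ ENNReal.ofReal (M * (b - a)) :=
  calc ∫⁻ x in Ioc a b, ENNReal.ofReal (f x) ≤ ∫⁻ _ in Ioc a b, ENNReal.ofReal M :=
        setLIntegral_mono' measurableSet_Ioc fun x hx => ENNReal.ofReal_le_ofReal (hf x hx)
    _ = _ := by rw [setLIntegral_const, Real.volume_Ioc, ENNReal.ofReal_mul hM]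

lemma setLIntegral_Ioc_ne_top_iff_summable {a : ℕ → ℝ} (ha : Antitone a)
    (ha0 : Tendsto a atTop (𝓝 0)) {f : ℝ → ℝ≥0∞} {u : ℕ → ℝ} (hu : ∀ n, 0 ≤ u n) {c K : ℝ}
    (hc : 0 < c) (hlo : ∀ n, ENNReal.ofReal (c * u n) ≤ ∫⁻ x in Ioc (a (n + 1)) (a n), f x)
    (hhi : ∀ n, ∫⁻ x in Ioc (a (n + 1)) (a n), f x ≤ ENNReal.ofReal (K * u n)) :
    ∫⁻ x in Ioc 0 (a 0), f x ≠ ∞ ↔ Summable u := by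
  have hdisj : Pairwise (Disjoint on fun n => Ioc (a (n + 1)) (a n)) :=
    ha.pairwise_disjoint_on_Ioc_succ
  rw [← iUnion_Ioc_succ_eq_Ioc_of_antitone ha ha0,
    lintegral_iUnion (fun _ => measurableSet_Ioc) hdisj]
  constructor
  · intro hfin
    have hsum := ENNReal.summable_toReal (ne_top_of_le_ne_top hfin (ENNReal.tsum_le_tsum hlo))
    simp_rw [ENNReal.toReal_ofReal (mul_nonneg hc.le (hu _))] at hsum
    exact (summable_mul_left_iff hc.ne').1 hsum
  · intro hsum
    exact ne_top_of_le_ne_top (hsum.mul_left K).tsum_ofReal_ne_top (ENNReal.tsum_le_tsum hhi)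

namespace LU

variable {α₁ α₂ : ℝ} {ψ : ℝ → ℝ}

lemma pos (h : LU α₁ α₂ ψ) {r : ℝ} (hr : 0 < r) : 0 < ψ r := by
  have ⟨_, hmono, h0, _⟩ := h
  simpa [h0] using hmono self_mem_Ici hr.le hr

lemma monotoneOn (h : LU α₁ α₂ ψ) : MonotoneOn ψ (Ici 0) :=
  h.2.1.monotoneOn

lemma exists_le_mul_of_mem_Icc (h : LU α₁ α₂ ψ) {q : ℝ} (hq : 0 < q) :
    ∃ A, 0 < A ∧ ∀ b, 0 < b → ∀ s ∈ Icc (q * b) b, ψ b ≤ A * ψ s := by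
  have ⟨_, _, _, _, C, hC, hbound⟩ := h
  refine ⟨C * q⁻¹ ^ |α₂|, by positivity, fun b hb s hs => ?_⟩
  have hs0 : 0 < s := (mul_pos hq hb).trans_le hs.1
  have hratio : b / s ≤ q⁻¹ := by
    rw [div_le_iff₀ hs0, inv_mul_eq_div, le_div_iff₀ hq]
    linarith [hs.1]
  have hpow : (b / s) ^ α₂ ≤ q⁻¹ ^ |α₂| :=
    calc (b / s) ^ α₂ ≤ (b / s) ^ |α₂| :=
          rpow_le_rpow_of_exponent_le ((one_le_div hs0).2 hs.2) (le_abs_self α₂)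
      _ ≤ q⁻¹ ^ |α₂| := rpow_le_rpow (by positivity) hratio (abs_nonneg α₂)
  have hψs := h.pos hs0
  calc ψ b = ψ s * (ψ b / ψ s) := by field_simp
    _ ≤ ψ s * (C * (b / s) ^ α₂) := by gcongr; exact (hbound s b hs0 hs.2).2
    _ ≤ ψ s * (C * q⁻¹ ^ |α₂|) := by gcongr
    _ = C * q⁻¹ ^ |α₂| * ψ s := by ring

lemma exists_two_mul_le (h : LU α₁ α₂ ψ) (hα : 0 < α₁) :
    ∃ q, 0 < q ∧ q < 1 ∧ ∀ r, 0 < r → 2 * ψ (q * r) ≤ ψ r := by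
  have ⟨_, _, _, _, C, hC, hbound⟩ := h
  have hq : 1 < (2 * C) ^ α₁⁻¹ := one_lt_rpow (by linarith) (inv_pos.2 hα)
  -- `q⁻¹ ^ α₁ = 2C`, so the lower bound of `LU` at the ratio `q⁻¹` reads `ψ r ≥ 2 ψ (q r)`.
  refine ⟨((2 * C) ^ α₁⁻¹)⁻¹, by positivity, inv_lt_one_of_one_lt₀ hq, fun r hr => ?_⟩
  set q := ((2 * C) ^ α₁⁻¹)⁻¹
  have hqr : 0 < q * r := by positivity
  have hlow := (hbound (q * r) r hqr (by nlinarith [inv_lt_one_of_one_lt₀ hq])).1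
  have hratio : r / (q * r) = q⁻¹ := by field_simp
  have hC2 : C⁻¹ * (2 * C) = 2 := by field_simp
  rwa [hratio, inv_inv, rpow_inv_rpow (by linarith) hα.ne', hC2, le_div_iff₀ (h.pos hqr)] at hlow

lemma antitone_comp_pow (h : LU α₁ α₂ ψ) {q : ℝ} (hq0 : 0 ≤ q) (hq1 : q ≤ 1) :
    Antitone (fun n : ℕ => ψ (q ^ n)) := fun _ _ hmn =>
  h.monotoneOn (pow_nonneg hq0 _) (pow_nonneg hq0 _) (pow_right_anti₀ hq0 hq1 hmn)

lemma tendsto_comp_pow (h : LU α₁ α₂ ψ) {q : ℝ} (hq0 : 0 ≤ q) (hq1 : q < 1) :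
    Tendsto (fun n : ℕ => ψ (q ^ n)) atTop (𝓝 0) := by
  have ⟨hcont, _, h0, _⟩ := h
  rw [← h0]
  exact (hcont 0 self_mem_Ici).tendsto.comp (tendsto_nhdsWithin_iff.2
    ⟨tendsto_pow_atTop_nhds_zero_of_lt_one hq0 hq1, .of_forall fun n => pow_nonneg hq0 n⟩)

lemma surjOn_Icc (h : LU α₁ α₂ ψ) : SurjOn ψ (Icc 0 1) (Icc 0 1) := by
  have ⟨hcont, _, h0, h1, _⟩ := h
  have hivt := intermediate_value_Icc zero_le_one (hcont.mono Icc_subset_Ici_self)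
  rwa [h0, h1] at hivt

section Inverse

variable {ψinv : ℝ → ℝ}

lemma mapsTo_Icc_and_rightInvOn (h : LU α₁ α₂ ψ) (hinv : ∀ r, 0 ≤ r → ψinv (ψ r) = r) :
    MapsTo ψinv (Icc 0 1) (Icc 0 1) ∧ RightInvOn ψinv ψ (Icc 0 1) := by
  constructor
  · intro t ht
    obtain ⟨r, hr, rfl⟩ := h.surjOn_Icc ht
    rwa [hinv r hr.1]
  · intro t ht
    obtain ⟨r, hr, rfl⟩ := h.surjOn_Icc ht
    rw [hinv r hr.1]

lemma mapsTo_inv_Ioc (h : LU α₁ α₂ ψ) (hinv : ∀ r, 0 ≤ r → ψinv (ψ r) = r) {a b : ℝ}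
    (ha : a ∈ Icc 0 1) (hb : b ∈ Icc 0 1) : MapsTo ψinv (Ioc (ψ a) (ψ b)) (Ioc a b) := by
  have ⟨_, hmono, h0, h1, _⟩ := h
  obtain ⟨hmaps, hright⟩ := h.mapsTo_Icc_and_rightInvOn hinv
  intro t ht
  have htI : t ∈ Icc (0 : ℝ) 1 :=
    ⟨h0 ▸ (h.monotoneOn self_mem_Ici ha.1 ha.1).trans ht.1.le,
      ht.2.trans (h1 ▸ h.monotoneOn hb.1 (mem_Ici.2 zero_le_one) hb.2)⟩
  rw [← hright htI] at ht
  exact ⟨(hmono.lt_iff_lt ha.1 (hmaps htI).1).1 ht.1, (hmono.le_iff_le (hmaps htI).1 hb.1).1 ht.2⟩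

lemma monotoneOn_inv (h : LU α₁ α₂ ψ) (hinv : ∀ r, 0 ≤ r → ψinv (ψ r) = r) :
    MonotoneOn ψinv (Icc 0 1) := by
  obtain ⟨hmaps, hright⟩ := h.mapsTo_Icc_and_rightInvOn hinv
  intro t₁ ht₁ t₂ ht₂ hle
  rwa [← h.2.1.le_iff_le (hmaps ht₁).1 (hmaps ht₂).1, hright ht₁, hright ht₂]

end Inverse

end LU

section Integrability

variable {β₁ β₂ γ₁ γ₂ q A b : ℝ} {φ ψ φinv : ℝ → ℝ}

lemma ofReal_mul_le_setLIntegral_div_mul (hφ : LU β₁ β₂ φ) (hψ : LU γ₁ γ₂ ψ) (hq0 : 0 < q)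
    (hA : 0 < A) (hb : 0 < b) (hblock : ∀ s ∈ Icc (q * b) b, φ b ≤ A * φ s) :
    ENNReal.ofReal ((1 - q) / A * (φ b / ψ b)) ≤
      ∫⁻ x in Ioc (q * b) b, ENNReal.ofReal (φ x / (x * ψ x)) := by
  have hψb := hψ.pos hb
  calc ENNReal.ofReal ((1 - q) / A * (φ b / ψ b))
      = ENNReal.ofReal (φ b / A / (b * ψ b) * (b - q * b)) := by
        congr 1; field_simp
    _ ≤ _ := by
      refine ofReal_mul_sub_le_setLIntegral_Ioc (div_nonneg (div_nonneg (hφ.pos hb).le hA.le)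
        (by positivity)) fun x hx => ?_
      have hx0 : 0 < x := (mul_pos hq0 hb).trans hx.1
      exact div_le_div₀ (hφ.pos hx0).le ((div_le_iff₀' hA).2 (hblock x ⟨hx.1.le, hx.2⟩))
        (mul_pos hx0 (hψ.pos hx0))
        (mul_le_mul hx.2 (hψ.monotoneOn hx0.le hb.le hx.2) (hψ.pos hx0).le hb.le)

lemma setLIntegral_div_mul_le_ofReal_mul (hφ : LU β₁ β₂ φ) (hψ : LU γ₁ γ₂ ψ) (hq0 : 0 < q)
    (hA : 0 < A) (hb : 0 < b) (hblock : ∀ s ∈ Icc (q * b) b, ψ b ≤ A * ψ s) :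
    ∫⁻ x in Ioc (q * b) b, ENNReal.ofReal (φ x / (x * ψ x)) ≤
      ENNReal.ofReal (A * (1 - q) / q * (φ b / ψ b)) := by
  have hψb := hψ.pos hb
  calc _ ≤ ENNReal.ofReal (φ b / (q * b * (ψ b / A)) * (b - q * b)) := by
        refine setLIntegral_Ioc_le_ofReal_mul_sub (div_nonneg (hφ.pos hb).le (by positivity))
          fun x hx => ?_
        have hx0 : 0 < x := (mul_pos hq0 hb).trans hx.1
        exact div_le_div₀ (hφ.pos hb).le (hφ.monotoneOn hx0.le hb.le hx.2) (by positivity)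
          (mul_le_mul hx.1.le ((div_le_iff₀' hA).2 (hblock x ⟨hx.1.le, hx.2⟩))
            (by positivity) hx0.le)
    _ = _ := by congr 1; field_simp

lemma ofReal_mul_le_setLIntegral_one_div_comp_inv (hψ : LU γ₁ γ₂ ψ) (hq0 : 0 < q) (hb : 0 < b)
    (hhalf : 2 * φ (q * b) ≤ φ b)
    (hmaps : MapsTo φinv (Ioc (φ (q * b)) (φ b)) (Ioc (q * b) b)) :
    ENNReal.ofReal (1 / 2 * (φ b / ψ b)) ≤
      ∫⁻ t in Ioc (φ (q * b)) (φ b), ENNReal.ofReal (1 / ψ (φinv t)) := by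
  have hψb := hψ.pos hb
  calc ENNReal.ofReal (1 / 2 * (φ b / ψ b))
      ≤ ENNReal.ofReal (1 / ψ b * (φ b - φ (q * b))) := by
        apply ENNReal.ofReal_le_ofReal
        rw [mul_div_assoc', one_div_mul_eq_div (ψ b), div_le_div_iff_of_pos_right hψb]
        linarith
    _ ≤ _ := by
      refine ofReal_mul_sub_le_setLIntegral_Ioc (by positivity) fun t ht => ?_
      obtain ⟨hlo, hhi⟩ := hmaps ht
      have hr0 := (mul_pos hq0 hb).trans hlo
      exact one_div_le_one_div_of_le (hψ.pos hr0) (hψ.monotoneOn hr0.le hb.le hhi)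

lemma setLIntegral_one_div_comp_inv_le_ofReal_mul (hφ : LU β₁ β₂ φ) (hψ : LU γ₁ γ₂ ψ)
    (hq0 : 0 < q) (hA : 0 < A) (hb : 0 < b) (hblock : ∀ s ∈ Icc (q * b) b, ψ b ≤ A * ψ s)
    (hmaps : MapsTo φinv (Ioc (φ (q * b)) (φ b)) (Ioc (q * b) b)) :
    ∫⁻ t in Ioc (φ (q * b)) (φ b), ENNReal.ofReal (1 / ψ (φinv t)) ≤
      ENNReal.ofReal (A * (φ b / ψ b)) := by
  have hψb := hψ.pos hb
  calc _ ≤ ENNReal.ofReal (A / ψ b * (φ b - φ (q * b))) := by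
        refine setLIntegral_Ioc_le_ofReal_mul_sub (by positivity) fun t ht => ?_
        obtain ⟨hlo, hhi⟩ := hmaps ht
        have hr0 := (mul_pos hq0 hb).trans hlo
        rw [div_le_div_iff₀ (hψ.pos hr0) hψb]
        linarith [hblock _ ⟨hlo.le, hhi⟩]
    _ ≤ ENNReal.ofReal (A * (φ b / ψ b)) := by
        apply ENNReal.ofReal_le_ofReal
        rw [mul_div_assoc', div_mul_eq_mul_div]
        gcongr
        linarith [hφ.pos (mul_pos hq0 hb)]

lemma integrableOn_div_mul_iff_summable (hφ : LU β₁ β₂ φ) (hψ : LU γ₁ γ₂ ψ) (hq0 : 0 < q)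
    (hq1 : q < 1) :
    IntegrableOn (fun s => φ s / (s * ψ s)) (Ioc 0 1) ↔
      Summable (fun n : ℕ => φ (q ^ n) / ψ (q ^ n)) := by
  obtain ⟨Aφ, hAφ, hφblock⟩ := hφ.exists_le_mul_of_mem_Icc hq0
  obtain ⟨Aψ, hAψ, hψblock⟩ := hψ.exists_le_mul_of_mem_Icc hq0
  have hpos : ∀ s ∈ Ioc (0 : ℝ) 1, 0 < s * ψ s := fun s hs => mul_pos hs.1 (hψ.pos hs.1)
  have ⟨hφc, _⟩ := hφ
  have ⟨hψc, _⟩ := hψ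
  have hsub : Ioc (0 : ℝ) 1 ⊆ Ici 0 := fun s hs => hs.1.le
  have hmeas : AEStronglyMeasurable (fun s => φ s / (s * ψ s)) (volume.restrict (Ioc 0 1)) :=
    ((hφc.mono hsub).div (continuousOn_id.mul (hψc.mono hsub)) fun s hs =>
      (hpos s hs).ne').aestronglyMeasurable measurableSet_Ioc
  rw [IntegrableOn, ← lintegral_ofReal_ne_top_iff_integrable hmeas
    (ae_restrict_of_forall_mem measurableSet_Ioc fun s hs =>
      div_nonneg (hφ.pos hs.1).le (hpos s hs).le), ← pow_zero q]
  refine setLIntegral_Ioc_ne_top_iff_summable (pow_right_anti₀ hq0.le hq1.le)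
    (tendsto_pow_atTop_nhds_zero_of_lt_one hq0.le hq1)
    (fun n => (div_pos (hφ.pos (pow_pos hq0 n)) (hψ.pos (pow_pos hq0 n))).le)
    (c := (1 - q) / Aφ) (K := Aψ * (1 - q) / q) (div_pos (sub_pos.2 hq1) hAφ)
    (fun n => ?_) (fun n => ?_) <;> rw [pow_succ']
  · exact ofReal_mul_le_setLIntegral_div_mul hφ hψ hq0 hAφ (pow_pos hq0 n)
      (hφblock _ (pow_pos hq0 n))
  · exact setLIntegral_div_mul_le_ofReal_mul hφ hψ hq0 hAψ (pow_pos hq0 n)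
      (hψblock _ (pow_pos hq0 n))

lemma integrableOn_one_div_comp_inv_iff_summable (hφ : LU β₁ β₂ φ) (hψ : LU γ₁ γ₂ ψ)
    (hinv : ∀ r, 0 ≤ r → φinv (φ r) = r) (hq0 : 0 < q) (hq1 : q < 1)
    (hhalf : ∀ r, 0 < r → 2 * φ (q * r) ≤ φ r) :
    IntegrableOn (fun t => 1 / ψ (φinv t)) (Ioc 0 1) ↔
      Summable (fun n : ℕ => φ (q ^ n) / ψ (q ^ n)) := by
  obtain ⟨A, hA, hψblock⟩ := hψ.exists_le_mul_of_mem_Icc hq0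
  have ⟨_, _, hφ0, hφ1, _⟩ := hφ
  have hpos : ∀ t ∈ Ioc (0 : ℝ) 1, 0 < φinv t := fun t ht =>
    (hφ.mapsTo_inv_Ioc hinv (left_mem_Icc.2 zero_le_one) (right_mem_Icc.2 zero_le_one)
      (by rwa [hφ0, hφ1])).1
  have hanti : AntitoneOn (fun t => 1 / ψ (φinv t)) (Ioc 0 1) := fun t₁ ht₁ t₂ ht₂ hle =>
    one_div_le_one_div_of_le (hψ.pos (hpos t₁ ht₁)) (hψ.monotoneOn (hpos t₁ ht₁).le
      (hpos t₂ ht₂).le (hφ.monotoneOn_inv hinv (Ioc_subset_Icc_self ht₁)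
        (Ioc_subset_Icc_self ht₂) hle))
  have hIoc : Ioc (0 : ℝ) 1 = Ioc 0 (φ (q ^ 0)) := by rw [pow_zero, hφ1]
  rw [IntegrableOn, ← lintegral_ofReal_ne_top_iff_integrable
    (aemeasurable_restrict_of_antitoneOn measurableSet_Ioc hanti).aestronglyMeasurable
    (ae_restrict_of_forall_mem measurableSet_Ioc fun t ht =>
      (one_div_pos.2 (hψ.pos (hpos t ht))).le), hIoc]
  have hqpow : ∀ n : ℕ, q ^ n ∈ Icc (0 : ℝ) 1 := fun n =>
    ⟨(pow_pos hq0 n).le, pow_le_one₀ hq0.le hq1.le⟩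
  have hmaps (n : ℕ) : MapsTo φinv (Ioc (φ (q * q ^ n)) (φ (q ^ n))) (Ioc (q * q ^ n) (q ^ n)) := by
    simpa only [pow_succ'] using hφ.mapsTo_inv_Ioc hinv (hqpow (n + 1)) (hqpow n)
  refine setLIntegral_Ioc_ne_top_iff_summable (hφ.antitone_comp_pow hq0.le hq1.le)
    (hφ.tendsto_comp_pow hq0.le hq1)
    (fun n => (div_pos (hφ.pos (pow_pos hq0 n)) (hψ.pos (pow_pos hq0 n))).le) (K := A)
    one_half_pos (fun n => ?_) (fun n => ?_) <;> rw [pow_succ']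
  · exact ofReal_mul_le_setLIntegral_one_div_comp_inv hψ hq0 (pow_pos hq0 n)
      (hhalf _ (pow_pos hq0 n)) (hmaps n)
  · exact setLIntegral_one_div_comp_inv_le_ofReal_mul hφ hψ hq0 hA (pow_pos hq0 n)
      (hψblock _ (pow_pos hq0 n)) (hmaps n)

end Integrability

theorem stmt_5_general (β₁ β₂ γ₁ γ₂ : ℝ) (hβ₁ : 0 < β₁)
    (φ ψ φinv : ℝ → ℝ) (hφ : LU β₁ β₂ φ) (hψ : LU γ₁ γ₂ ψ)
    (hinv₁ : ∀ r : ℝ, 0 ≤ r → φinv (φ r) = r) :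
    IntegrableOn (fun s => φ s / (s * ψ s)) (Ioc (0 : ℝ) 1) ↔
      IntegrableOn (fun s => 1 / ψ (φinv s)) (Ioc (0 : ℝ) 1) := by
  obtain ⟨q, hq0, hq1, hhalf⟩ := hφ.exists_two_mul_le hβ₁
  rw [integrableOn_div_mul_iff_summable hφ hψ hq0 hq1,
    integrableOn_one_div_comp_inv_iff_summable hφ hψ hinv₁ hq0 hq1 hhalf]

theorem stmt_5 (β₁ β₂ γ₁ γ₂ : ℝ) (hβ₁ : 0 < β₁) (hβ : β₁ ≤ β₂)
    (hγ₁ : 0 < γ₁) (hγ : γ₁ ≤ γ₂)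
    (φ ψ φinv : ℝ → ℝ) (hφ : LU β₁ β₂ φ) (hψ : LU γ₁ γ₂ ψ)
    (hinv₁ : ∀ r : ℝ, 0 ≤ r → φinv (φ r) = r)
    (hinv₂ : ∀ t : ℝ, 0 ≤ t → φ (φinv t) = t) :
    IntegrableOn (fun s => φ s / (s * ψ s)) (Ioc (0 : ℝ) 1) ↔
      IntegrableOn (fun s => 1 / ψ (φinv s)) (Ioc (0 : ℝ) 1) :=
  stmt_5_general β₁ β₂ γ₁ γ₂ hβ₁ φ ψ φinv hφ hψ hinv₁
end

section
/- Let ψ satisfy LU(γ₁,γ₂) and φ satisfy LU(β₁,β₂). Then there is C > 0 such that for all r > 0, ∫_{φ(r)}^∞ (1/(t ψ(φ⁻¹(t)))) dt ≤ C/ψ(r). -/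
open Real Set MeasureTheory

/-!
Writing `t = φ s` with `s ≥ r`, the upper scaling of `φ` and the lower scaling of `ψ` give
`(t / φ r) ^ (γ₁ / β₂) ≲ ψ s / ψ r`, so the integrand is at most a multiple of
`1 / (ψ r * t * (t / φ r) ^ (γ₁ / β₂))`, whose integral over `(φ r, ∞)` is `β₂ / (γ₁ * ψ r)`.
Such an `s` exists because `φ`, being continuous and of lower scaling order `β₁ > 0`,
maps `[0, ∞)` onto `[0, ∞)`.
-/

open Filter

namespace LU

variable {α₁ α₂ : ℝ} {φ : ℝ → ℝ}

theorem pos_of_pos (h : LU α₁ α₂ φ) {x : ℝ} (hx : 0 < x) : 0 < φ x := by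
  simpa [h.2.2.1] using h.2.1 (mem_Ici.2 le_rfl) (mem_Ici.2 hx.le) hx

theorem tendsto_atTop (h : LU α₁ α₂ φ) (hα₁ : 0 < α₁) : Tendsto φ atTop atTop := by
  obtain ⟨-, -, -, hφ1, C, hC, hφ⟩ := h
  have hlower : ∀ R ∈ Ici (1 : ℝ), C⁻¹ * R ^ α₁ ≤ φ R := fun R hR => by
    simpa [hφ1] using (hφ 1 R one_pos hR).1
  exact tendsto_atTop_mono' _ (eventually_of_mem (Ici_mem_atTop 1) hlower)
    ((tendsto_rpow_atTop hα₁).const_mul_atTop (by positivity))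

theorem surjOn_Ici (h : LU α₁ α₂ φ) (hα₁ : 0 < α₁) : SurjOn φ (Ici 0) (Ici 0) := by
  simpa [SurjOn, h.2.2.1] using intermediate_value_Ici h.1 (h.tendsto_atTop hα₁)

theorem rpow_div_le_mul_div {β₁ β₂ γ₁ γ₂ : ℝ} {ψ : ℝ → ℝ} (hφ : LU β₁ β₂ φ) (hψ : LU γ₁ γ₂ ψ)
    (hβ₂ : 0 < β₂) (hγ₁ : 0 ≤ γ₁) :
    ∃ K : ℝ, 0 < K ∧ ∀ r s : ℝ, 0 < r → r ≤ s →
      (φ s / φ r) ^ (γ₁ / β₂) ≤ K * (ψ s / ψ r) := by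
  obtain ⟨Cφ, hCφ, hφC⟩ := hφ.2.2.2.2
  obtain ⟨Cψ, hCψ, hψC⟩ := hψ.2.2.2.2
  refine ⟨Cφ ^ (γ₁ / β₂) * Cψ, by positivity, fun r s hr hrs => ?_⟩
  have ha : 0 ≤ γ₁ / β₂ := div_nonneg hγ₁ hβ₂.le
  have hsr : 0 ≤ s / r := div_nonneg (hr.le.trans hrs) hr.le
  calc (φ s / φ r) ^ (γ₁ / β₂)
      ≤ (Cφ * (s / r) ^ β₂) ^ (γ₁ / β₂) :=
        rpow_le_rpow (div_nonneg (hφ.pos_of_pos (hr.trans_le hrs)).le (hφ.pos_of_pos hr).le)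
          (hφC r s hr hrs).2 ha
    _ = Cφ ^ (γ₁ / β₂) * (Cψ * (Cψ⁻¹ * (s / r) ^ γ₁)) := by
        rw [mul_rpow (by positivity) (by positivity), ← rpow_mul hsr,
          mul_div_cancel₀ _ hβ₂.ne', mul_inv_cancel_left₀ (by positivity)]
    _ ≤ Cφ ^ (γ₁ / β₂) * (Cψ * (ψ s / ψ r)) := by
        gcongr
        exact (hψC r s hr hrs).1
    _ = Cφ ^ (γ₁ / β₂) * Cψ * (ψ s / ψ r) := by ring

end LU

theorem setIntegral_Ioi_le_div_of_le {f : ℝ → ℝ} {a b c : ℝ} (ha : 0 < a) (hb : 0 < b)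
    (hf₀ : ∀ t ∈ Ioi b, 0 ≤ f t) (hf : ∀ t ∈ Ioi b, f t ≤ c / (t * (t / b) ^ a)) :
    ∫ t in Ioi b, f t ≤ c / a := by
  have hlt : -1 - a < -1 := by linarith
  have hg : ∀ t ∈ Ioi b, c / (t * (t / b) ^ a) = c * b ^ a * t ^ (-1 - a) := fun t ht => by
    have ht₀ : 0 < t := hb.trans ht
    rw [div_rpow ht₀.le hb.le, show -1 - a = -(1 + a) by ring, rpow_neg ht₀.le,
      rpow_add ht₀, rpow_one]
    field_simp
  calc ∫ t in Ioi b, f t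
      ≤ ∫ t in Ioi b, c * b ^ a * t ^ (-1 - a) :=
        integral_mono_of_nonneg ((ae_restrict_mem measurableSet_Ioi).mono hf₀)
          ((integrableOn_Ioi_rpow_of_lt hlt hb).const_mul _)
          ((ae_restrict_mem measurableSet_Ioi).mono fun t ht => (hf t ht).trans_eq (hg t ht))
    _ = c / a := by
        rw [integral_const_mul, integral_Ioi_rpow_of_lt hlt hb,
          show -1 - a + 1 = -a by ring, rpow_neg hb.le]
        field_simp

theorem stmt_12_general (β₁ β₂ γ₁ γ₂ : ℝ) (hβ₁ : 0 < β₁) (hβ : β₁ ≤ β₂)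
    (hγ₁ : 0 < γ₁)
    (φ ψ φinv : ℝ → ℝ) (hφ : LU β₁ β₂ φ) (hψ : LU γ₁ γ₂ ψ)
    (hinv₁ : ∀ r : ℝ, 0 ≤ r → φinv (φ r) = r) :
    ∃ C : ℝ, 0 < C ∧ ∀ r : ℝ, 0 < r →
      (∫ t in Ioi (φ r), 1 / (t * ψ (φinv t))) ≤ C / ψ r := by
  have hβ₂ : 0 < β₂ := hβ₁.trans_le hβ
  obtain ⟨K, hK, hKψ⟩ := hφ.rpow_div_le_mul_div hψ hβ₂ hγ₁.le
  refine ⟨K / (γ₁ / β₂), by positivity, fun r hr => ?_⟩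
  have hψr : 0 < ψ r := hψ.pos_of_pos hr
  have hφr : 0 < φ r := hφ.pos_of_pos hr
  have hpoint : ∀ t ∈ Ioi (φ r),
      0 < ψ (φinv t) ∧ (t / φ r) ^ (γ₁ / β₂) ≤ K * (ψ (φinv t) / ψ r) := by
    intro t ht
    obtain ⟨s, hs, rfl⟩ := hφ.surjOn_Ici hβ₁ (mem_Ici.2 (hφr.le.trans ht.le))
    have hrs : r ≤ s := (hφ.2.1.le_iff_le (mem_Ici.2 hr.le) (mem_Ici.2 hs)).1 ht.le
    rw [hinv₁ s hs]
    exact ⟨hψ.pos_of_pos (hr.trans_le hrs), hKψ r s hr hrs⟩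
  rw [div_right_comm]
  refine setIntegral_Ioi_le_div_of_le (by positivity) hφr (fun t ht => ?_) (fun t ht => ?_) <;>
    obtain ⟨hψt, hle⟩ := hpoint t ht <;> have ht₀ : 0 < t := hφr.trans ht
  · positivity
  · rw [div_le_div_iff₀ (by positivity) (by positivity)]
    calc 1 * (t * (t / φ r) ^ (γ₁ / β₂))
        ≤ t * (K * (ψ (φinv t) / ψ r)) := by rw [one_mul]; gcongr
      _ = K / ψ r * (t * ψ (φinv t)) := by ring

theorem stmt_12 (β₁ β₂ γ₁ γ₂ : ℝ) (hβ₁ : 0 < β₁) (hβ : β₁ ≤ β₂)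
    (hγ₁ : 0 < γ₁) (hγ : γ₁ ≤ γ₂)
    (φ ψ φinv : ℝ → ℝ) (hφ : LU β₁ β₂ φ) (hψ : LU γ₁ γ₂ ψ)
    (hinv₁ : ∀ r : ℝ, 0 ≤ r → φinv (φ r) = r)
    (hinv₂ : ∀ t : ℝ, 0 ≤ t → φ (φinv t) = t) :
    ∃ C : ℝ, 0 < C ∧ ∀ r : ℝ, 0 < r →
      (∫ t in Ioi (φ r), 1 / (t * ψ (φinv t))) ≤ C / ψ r :=
  stmt_12_general β₁ β₂ γ₁ γ₂ hβ₁ hβ hγ₁ φ ψ φinv hφ hψ hinv₁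
end

section
/- Let β ≥ 2, γ₁ ∈ (0,1), γ₂ ∈ (1,∞), and set φ(r) := r^β and ψ(r) := r^{γ₁β} ∨ r^{γ₂β}. Define φ̄(λ) := ∫₀^∞ (1 - e^{-λt})/(t ψ(φ⁻¹(t))) dt. Then φ̄(φ(r)⁻¹) ≃ r^{-γ₁β} ∧ r^{-β} and 1/ψ(r) ≃ r^{-γ₁β} ∧ r^{-γ₂β} (comparable up to multiplicative constants uniform in r > 0), and consequently φ̄(φ(r)⁻¹) and 1/ψ(r) are not comparable on (0,∞) when γ₂ > 1. -/
open Real Set MeasureTheory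

/-!
Since `min x 1 / 2 ≤ 1 - exp (-x) ≤ min x 1` for `x ≥ 0`, `φ̄(λ)` is comparable to
`∫₀^∞ min (λ t) 1 / (t ψ(φ⁻¹ t)) dt`. Bounding `1 / ψ(φ⁻¹ t)` by `t ^ (-γ₁)` or by `t ^ (-γ₂)` and
splitting the integral at `1` or at `1 / λ` gives `φ̄(λ) ≲ λ ∧ λ ^ γ₁`; restricting it to `(1, ∞)`
or to `(0, 1 / λ]` gives the matching lower bounds. At `λ = r ^ (-β)` this is
`r ^ (-γ₁ β) ∧ r ^ (-β)`, which for large `r` decays like `r ^ (-β)`, strictly slower than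
`1 / ψ(r) = r ^ (-γ₂ β)`.
-/

lemma one_sub_exp_neg_le_min (x : ℝ) : 1 - exp (-x) ≤ min x 1 :=
  le_min (by linarith [add_one_le_exp (-x)]) (by linarith [exp_pos (-x)])

lemma min_div_two_le_one_sub_exp_neg {x : ℝ} (hx : 0 ≤ x) : min x 1 / 2 ≤ 1 - exp (-x) := by
  have hexp : exp (-x) * (1 + x) ≤ 1 := by
    rw [exp_neg, inv_mul_le_iff₀ (exp_pos x), mul_one, add_comm]
    exact add_one_le_exp x
  rcases le_total x 1 with h | h
  · rw [min_eq_left h]; nlinarith [exp_pos (-x)]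
  · rw [min_eq_right h]; nlinarith [exp_pos (-x)]

lemma integral_Ioc_zero_rpow_neg {a γ : ℝ} (ha : 0 ≤ a) (hγ : γ < 1) :
    ∫ t in Ioc 0 a, t ^ (-γ) = a ^ (1 - γ) / (1 - γ) := by
  rw [← intervalIntegral.integral_of_le ha, integral_rpow (Or.inl (by linarith)),
    zero_rpow (by linarith), neg_add_eq_sub, sub_zero]

lemma integral_Ioi_rpow_neg {a γ : ℝ} (ha : 0 < a) (hγ : 1 < γ) :
    ∫ t in Ioi a, t ^ (-γ) = a ^ (1 - γ) / (γ - 1) := by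
  rw [integral_Ioi_rpow_of_lt (by linarith) ha, neg_add_eq_sub, neg_div, ← div_neg, neg_sub]

lemma integrableOn_Ioc_zero_rpow_neg {a γ : ℝ} (hγ : γ < 1) :
    IntegrableOn (fun t : ℝ ↦ t ^ (-γ)) (Ioc 0 a) :=
  (intervalIntegral.intervalIntegrable_rpow' (by linarith)).1

lemma integrableOn_Ioi_rpow_neg {a γ : ℝ} (ha : 0 < a) (hγ : 1 < γ) :
    IntegrableOn (fun t : ℝ ↦ t ^ (-γ)) (Ioi a) :=
  integrableOn_Ioi_rpow_of_lt (by linarith) ha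

lemma MeasureTheory.IntegrableOn.of_nonneg_of_le {α : Type*} [MeasurableSpace α] {μ : Measure α}
    {f g : α → ℝ} {s : Set α} (hg : IntegrableOn g s μ) (hs : MeasurableSet s)
    (hf : Measurable f) (hf0 : ∀ t ∈ s, 0 ≤ f t) (hfg : ∀ t ∈ s, f t ≤ g t) :
    IntegrableOn f s μ :=
  hg.mono' hf.aestronglyMeasurable <| (ae_restrict_iff' hs).2 <| ae_of_all _ fun t ht ↦ by
    rw [norm_of_nonneg (hf0 t ht)]; exact hfg t ht

section PowerMajorant

variable {f : ℝ → ℝ} {a c₁ c₂ γ₁ γ₂ : ℝ}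

lemma integrableOn_Ioi_zero_of_le_rpow (hf : Measurable f) (hf0 : ∀ t ∈ Ioi 0, 0 ≤ f t)
    (ha : 0 < a) (hγ₁ : γ₁ < 1) (hγ₂ : 1 < γ₂)
    (h₁ : ∀ t ∈ Ioc 0 a, f t ≤ c₁ * t ^ (-γ₁)) (h₂ : ∀ t ∈ Ioi a, f t ≤ c₂ * t ^ (-γ₂)) :
    IntegrableOn f (Ioi 0) := by
  rw [← Ioc_union_Ioi_eq_Ioi ha.le]
  exact (IntegrableOn.of_nonneg_of_le ((integrableOn_Ioc_zero_rpow_neg hγ₁).const_mul c₁)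
      measurableSet_Ioc hf (fun t ht ↦ hf0 t ht.1) h₁).union
    (IntegrableOn.of_nonneg_of_le ((integrableOn_Ioi_rpow_neg ha hγ₂).const_mul c₂)
      measurableSet_Ioi hf (fun t ht ↦ hf0 t (ha.trans ht)) h₂)

lemma integral_Ioi_zero_le_of_le_rpow (hf : Measurable f) (hf0 : ∀ t ∈ Ioi 0, 0 ≤ f t)
    (ha : 0 < a) (hγ₁ : γ₁ < 1) (hγ₂ : 1 < γ₂)
    (h₁ : ∀ t ∈ Ioc 0 a, f t ≤ c₁ * t ^ (-γ₁)) (h₂ : ∀ t ∈ Ioi a, f t ≤ c₂ * t ^ (-γ₂)) :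
    ∫ t in Ioi 0, f t ≤ c₁ * (a ^ (1 - γ₁) / (1 - γ₁)) + c₂ * (a ^ (1 - γ₂) / (γ₂ - 1)) := by
  have hint := integrableOn_Ioi_zero_of_le_rpow hf hf0 ha hγ₁ hγ₂ h₁ h₂
  rw [← Ioc_union_Ioi_eq_Ioi ha.le] at hint ⊢
  rw [setIntegral_union (Ioc_disjoint_Ioi le_rfl) measurableSet_Ioi
    (hint.mono_set subset_union_left) (hint.mono_set subset_union_right),
    ← integral_Ioc_zero_rpow_neg ha.le hγ₁, ← integral_Ioi_rpow_neg ha hγ₂,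
    ← integral_const_mul, ← integral_const_mul]
  exact add_le_add
    (setIntegral_mono_on (hint.mono_set subset_union_left)
      ((integrableOn_Ioc_zero_rpow_neg hγ₁).const_mul c₁) measurableSet_Ioc h₁)
    (setIntegral_mono_on (hint.mono_set subset_union_right)
      ((integrableOn_Ioi_rpow_neg ha hγ₂).const_mul c₂) measurableSet_Ioi h₂)

end PowerMajorant

section Integrand

variable {lam t s γ : ℝ}

lemma rpow_neg_one_add (ht : 0 < t) : t ^ (-(1 + γ)) = (t * t ^ γ)⁻¹ := by
  rw [rpow_neg ht.le, rpow_add ht, rpow_one]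

lemma one_sub_exp_neg_mul_nonneg (hlam : 0 ≤ lam) (ht : 0 ≤ t) : 0 ≤ 1 - exp (-lam * t) := by
  rw [sub_nonneg, exp_le_one_iff, neg_mul, neg_nonpos]
  positivity

lemma one_sub_exp_div_le_mul_rpow_neg (hlam : 0 ≤ lam) (ht : 0 < t) (hs : t ^ γ ≤ s) :
    (1 - exp (-lam * t)) / (t * s) ≤ lam * t ^ (-γ) := by
  calc (1 - exp (-lam * t)) / (t * s) ≤ lam * t / (t * t ^ γ) := by
        gcongr
        simpa only [neg_mul] using (one_sub_exp_neg_le_min (lam * t)).trans (min_le_left _ _)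
    _ = lam * t ^ (-γ) := by rw [rpow_neg ht.le]; field_simp

lemma one_sub_exp_div_le_rpow_neg (ht : 0 < t) (hs : t ^ γ ≤ s) :
    (1 - exp (-lam * t)) / (t * s) ≤ t ^ (-(1 + γ)) := by
  rw [rpow_neg_one_add ht, ← one_div]
  gcongr
  simpa only [neg_mul] using (one_sub_exp_neg_le_min (lam * t)).trans (min_le_right _ _)

lemma min_mul_rpow_neg_le_one_sub_exp_div (hlam : 0 ≤ lam) (ht : 0 < t) :
    min (lam * t) 1 / 2 * t ^ (-(1 + γ)) ≤ (1 - exp (-lam * t)) / (t * t ^ γ) := by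
  rw [rpow_neg_one_add ht, ← div_eq_mul_inv, neg_mul]
  gcongr
  exact min_div_two_le_one_sub_exp_neg (mul_nonneg hlam ht.le)

end Integrand

lemma MeasureTheory.setIntegral_le_setIntegral_of_subset {α : Type*} [MeasurableSpace α]
    {μ : Measure α} {f g : α → ℝ} {s t : Set α} (hs : MeasurableSet s) (ht : MeasurableSet t)
    (hst : s ⊆ t) (hg : IntegrableOn g s μ) (hf : IntegrableOn f t μ)
    (hf0 : ∀ x ∈ t, 0 ≤ f x) (hgf : ∀ x ∈ s, g x ≤ f x) :
    ∫ x in s, g x ∂μ ≤ ∫ x in t, f x ∂μ :=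
  (setIntegral_mono_on hg (hf.mono_set hst) hs hgf).trans <|
    setIntegral_mono_set hf ((ae_restrict_iff' ht).2 (ae_of_all _ hf0)) hst.eventuallyLE

/-- The integrand of `φ̄(λ)`, where `t ψ(φ⁻¹(t)) = t (t ^ γ₁ ∨ t ^ γ₂)`. -/
noncomputable def phiBarIntegrand (γ₁ γ₂ lam t : ℝ) : ℝ :=
  (1 - exp (-lam * t)) / (t * max (t ^ γ₁) (t ^ γ₂))

noncomputable def phiBar (γ₁ γ₂ lam : ℝ) : ℝ :=
  ∫ t in Ioi 0, phiBarIntegrand γ₁ γ₂ lam t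

section PhiBar

variable {γ₁ γ₂ lam : ℝ}

lemma measurable_phiBarIntegrand : Measurable (phiBarIntegrand γ₁ γ₂ lam) := by
  unfold phiBarIntegrand; fun_prop

lemma phiBarIntegrand_nonneg (hlam : 0 ≤ lam) {t : ℝ} (ht : 0 < t) :
    0 ≤ phiBarIntegrand γ₁ γ₂ lam t :=
  div_nonneg (one_sub_exp_neg_mul_nonneg hlam ht.le)
    (mul_nonneg ht.le ((rpow_nonneg ht.le γ₁).trans (le_max_left _ _)))

lemma phiBarIntegrand_of_le_one (hγ : γ₁ ≤ γ₂) {t : ℝ} (ht : 0 < t) (ht1 : t ≤ 1) :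
    phiBarIntegrand γ₁ γ₂ lam t = (1 - exp (-lam * t)) / (t * t ^ γ₁) := by
  rw [phiBarIntegrand, max_eq_left (rpow_le_rpow_of_exponent_ge ht ht1 hγ)]

lemma phiBarIntegrand_of_one_le (hγ : γ₁ ≤ γ₂) {t : ℝ} (ht1 : 1 ≤ t) :
    phiBarIntegrand γ₁ γ₂ lam t = (1 - exp (-lam * t)) / (t * t ^ γ₂) := by
  rw [phiBarIntegrand, max_eq_right (rpow_le_rpow_of_exponent_le ht1 hγ)]

lemma integrableOn_phiBarIntegrand (hlam : 0 ≤ lam) (hγ₁ : γ₁ < 1) (hγ₂ : 1 < γ₂) :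
    IntegrableOn (phiBarIntegrand γ₁ γ₂ lam) (Ioi 0) :=
  integrableOn_Ioi_zero_of_le_rpow measurable_phiBarIntegrand
    (fun _ ht ↦ phiBarIntegrand_nonneg hlam ht) one_pos hγ₁ hγ₂
    (fun _ ht ↦ one_sub_exp_div_le_mul_rpow_neg hlam ht.1 (le_max_left _ _))
    (fun _ ht ↦ one_sub_exp_div_le_mul_rpow_neg hlam (one_pos.trans ht) (le_max_right _ _))

lemma phiBar_le_mul (hlam : 0 ≤ lam) (hγ₁ : γ₁ < 1) (hγ₂ : 1 < γ₂) :
    phiBar γ₁ γ₂ lam ≤ lam * ((1 - γ₁)⁻¹ + (γ₂ - 1)⁻¹) := by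
  refine (integral_Ioi_zero_le_of_le_rpow measurable_phiBarIntegrand
    (fun _ ht ↦ phiBarIntegrand_nonneg hlam ht) one_pos hγ₁ hγ₂
    (fun _ ht ↦ one_sub_exp_div_le_mul_rpow_neg hlam ht.1 (le_max_left _ _))
    (fun _ ht ↦ one_sub_exp_div_le_mul_rpow_neg hlam (one_pos.trans ht)
      (le_max_right _ _))).trans_eq ?_
  simp only [one_rpow, one_div]
  ring

lemma phiBar_le_rpow (hlam : 0 < lam) (hγ₁ : γ₁ ∈ Ioo 0 1) :
    phiBar γ₁ γ₂ lam ≤ lam ^ γ₁ * ((1 - γ₁)⁻¹ + γ₁⁻¹) := by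
  refine (integral_Ioi_zero_le_of_le_rpow (c₂ := 1) measurable_phiBarIntegrand
    (fun _ ht ↦ phiBarIntegrand_nonneg hlam.le ht) (inv_pos.2 hlam) hγ₁.2
    (by linarith [hγ₁.1] : 1 < 1 + γ₁)
    (fun _ ht ↦ one_sub_exp_div_le_mul_rpow_neg hlam.le ht.1 (le_max_left _ _))
    (fun t ht ↦ (one_sub_exp_div_le_rpow_neg ((inv_pos.2 hlam).trans ht)
      (le_max_left _ _)).trans_eq (one_mul _).symm)).trans_eq ?_
  have hlam_mul : lam * lam ^ (γ₁ - 1) = lam ^ γ₁ := by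
    rw [mul_comm, ← rpow_add_one hlam.ne', sub_add_cancel]
  rw [inv_rpow hlam.le, inv_rpow hlam.le, ← rpow_neg hlam.le, ← rpow_neg hlam.le, neg_sub,
    ← mul_div_assoc, hlam_mul, show 1 - (1 + γ₁) = -γ₁ by ring, neg_neg, add_sub_cancel_left]
  ring

lemma le_two_mul_phiBar_of_le_one (hlam : 0 ≤ lam) (hlam1 : lam ≤ 1) (hγ₁ : γ₁ < 1)
    (hγ₂ : 1 < γ₂) : lam ≤ 2 * γ₂ * phiBar γ₁ γ₂ lam := by
  have hlow : ∫ t in Ioi 1, lam / 2 * t ^ (-(1 + γ₂)) ≤ phiBar γ₁ γ₂ lam := by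
    refine setIntegral_le_setIntegral_of_subset measurableSet_Ioi measurableSet_Ioi
      (Ioi_subset_Ioi zero_le_one) ((integrableOn_Ioi_rpow_neg one_pos (by linarith)).const_mul _)
      (integrableOn_phiBarIntegrand hlam hγ₁ hγ₂) (fun _ ht ↦ phiBarIntegrand_nonneg hlam ht)
      fun t ht ↦ ?_
    have ht1 : 1 ≤ t := le_of_lt ht
    rw [phiBarIntegrand_of_one_le (by linarith) ht1]
    refine le_trans ?_ (min_mul_rpow_neg_le_one_sub_exp_div hlam (one_pos.trans ht))
    gcongr
    exact le_min (le_mul_of_one_le_right hlam ht1) hlam1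
  rw [integral_const_mul, integral_Ioi_rpow_neg one_pos (by linarith), one_rpow,
    add_sub_cancel_left] at hlow
  have hγ₂0 : 0 < γ₂ := by linarith
  calc lam = 2 * γ₂ * (lam / 2 * (1 / γ₂)) := by field_simp
    _ ≤ 2 * γ₂ * phiBar γ₁ γ₂ lam := by gcongr

lemma rpow_le_two_mul_phiBar_of_one_le (hlam : 1 ≤ lam) (hγ₁ : γ₁ < 1) (hγ₂ : 1 < γ₂) :
    lam ^ γ₁ ≤ 2 * (1 - γ₁) * phiBar γ₁ γ₂ lam := by
  have hlam0 : 0 < lam := one_pos.trans_le hlam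
  have hlow : ∫ t in Ioc 0 lam⁻¹, lam / 2 * t ^ (-γ₁) ≤ phiBar γ₁ γ₂ lam := by
    refine setIntegral_le_setIntegral_of_subset measurableSet_Ioc measurableSet_Ioi
      Ioc_subset_Ioi_self ((integrableOn_Ioc_zero_rpow_neg hγ₁).const_mul _)
      (integrableOn_phiBarIntegrand hlam0.le hγ₁ hγ₂)
      (fun _ ht ↦ phiBarIntegrand_nonneg hlam0.le ht) fun t ⟨ht0, ht⟩ ↦ ?_
    have hlamt : lam * t ≤ 1 := by rwa [← le_div_iff₀' hlam0, one_div]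
    rw [phiBarIntegrand_of_le_one (by linarith) ht0 (ht.trans (inv_le_one_of_one_le₀ hlam))]
    refine le_trans (le_of_eq ?_) (min_mul_rpow_neg_le_one_sub_exp_div hlam0.le ht0)
    rw [min_eq_left hlamt, rpow_neg_one_add ht0, rpow_neg ht0.le]
    field_simp
  have hlam_mul : lam * lam ^ (γ₁ - 1) = lam ^ γ₁ := by
    rw [mul_comm, ← rpow_add_one hlam0.ne', sub_add_cancel]
  rw [integral_const_mul, integral_Ioc_zero_rpow_neg (inv_pos.2 hlam0).le hγ₁, inv_rpow hlam0.le,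
    ← rpow_neg hlam0.le, neg_sub] at hlow
  have hγ₁' : 0 < 1 - γ₁ := by linarith
  calc lam ^ γ₁ = 2 * (1 - γ₁) * (lam / 2 * (lam ^ (γ₁ - 1) / (1 - γ₁))) := by
        rw [← hlam_mul]; field_simp
    _ ≤ 2 * (1 - γ₁) * phiBar γ₁ γ₂ lam := by gcongr

lemma phiBar_nonneg (hlam : 0 ≤ lam) : 0 ≤ phiBar γ₁ γ₂ lam :=
  setIntegral_nonneg measurableSet_Ioi fun _ ht ↦ phiBarIntegrand_nonneg hlam ht

theorem phiBar_comparable (hγ₁ : γ₁ ∈ Ioo 0 1) (hγ₂ : 1 < γ₂) :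
    ∃ C : ℝ, 1 ≤ C ∧ ∀ lam : ℝ, 0 < lam →
      C⁻¹ * min (lam ^ γ₁) lam ≤ phiBar γ₁ γ₂ lam ∧
        phiBar γ₁ γ₂ lam ≤ C * min (lam ^ γ₁) lam := by
  obtain ⟨hγ₁0, hγ₁1⟩ := hγ₁
  have hA₁ : 0 < (1 - γ₁)⁻¹ := inv_pos.2 (by linarith)
  have hA₂ : 0 < (γ₂ - 1)⁻¹ := inv_pos.2 (by linarith)
  have hA₃ : 0 < γ₁⁻¹ := inv_pos.2 hγ₁0
  refine ⟨2 * γ₂ + ((1 - γ₁)⁻¹ + (γ₂ - 1)⁻¹ + γ₁⁻¹), by linarith, fun lam hlam ↦ ⟨?_, ?_⟩⟩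
  · have hI := phiBar_nonneg (γ₁ := γ₁) (γ₂ := γ₂) hlam.le
    rw [inv_mul_le_iff₀ (by linarith)]
    rcases le_total lam 1 with h | h
    · calc min (lam ^ γ₁) lam ≤ lam := min_le_right _ _
        _ ≤ 2 * γ₂ * phiBar γ₁ γ₂ lam := le_two_mul_phiBar_of_le_one hlam.le h hγ₁1 hγ₂
        _ ≤ _ := by gcongr; linarith
    · calc min (lam ^ γ₁) lam ≤ lam ^ γ₁ := min_le_left _ _
        _ ≤ 2 * (1 - γ₁) * phiBar γ₁ γ₂ lam := rpow_le_two_mul_phiBar_of_one_le h hγ₁1 hγ₂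
        _ ≤ _ := by gcongr; linarith
  · rw [mul_min_of_nonneg _ _ (by linarith)]
    refine le_min ((phiBar_le_rpow hlam ⟨hγ₁0, hγ₁1⟩).trans ?_)
      ((phiBar_le_mul hlam.le hγ₁1 hγ₂).trans ?_)
    · rw [mul_comm]; exact mul_le_mul_of_nonneg_right (by linarith) (by positivity)
    · rw [mul_comm]; exact mul_le_mul_of_nonneg_right (by linarith) hlam.le

end PhiBar

lemma inv_max_rpow_eq_min_rpow_neg {r : ℝ} (hr : 0 < r) (a b : ℝ) :
    (max (r ^ a) (r ^ b))⁻¹ = min (r ^ (-a)) (r ^ (-b)) := by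
  rw [rpow_neg hr.le, rpow_neg hr.le]
  rcases le_total (r ^ a) (r ^ b) with h | h
  · rw [max_eq_right h, min_eq_right (inv_anti₀ (rpow_pos_of_pos hr a) h)]
  · rw [max_eq_left h, min_eq_left (inv_anti₀ (rpow_pos_of_pos hr b) h)]

lemma exists_mul_rpow_neg_lt_rpow_neg {a b : ℝ} (hab : a < b) (K : ℝ) :
    ∃ r : ℝ, 1 ≤ r ∧ K * r ^ (-b) < r ^ (-a) := by
  obtain ⟨r, hr1, hrK⟩ := ((Filter.eventually_ge_atTop 1).and
    ((tendsto_rpow_atTop (sub_pos.2 hab)).eventually_gt_atTop K)).exists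
  have hr0 : 0 < r := one_pos.trans_le hr1
  refine ⟨r, hr1, ?_⟩
  calc K * r ^ (-b) < r ^ (b - a) * r ^ (-b) := by gcongr
    _ = r ^ (-a) := by rw [← rpow_add hr0]; ring_nf

theorem stmt_15 (β γ₁ γ₂ : ℝ) (hβ : 2 ≤ β) (hγ₁ : γ₁ ∈ Ioo (0 : ℝ) 1)
    (hγ₂ : 1 < γ₂) :
    (∃ C : ℝ, 1 ≤ C ∧ ∀ r : ℝ, 0 < r →
        C⁻¹ * min (r ^ (-(γ₁ * β))) (r ^ (-β)) ≤
          (∫ t in Ioi (0 : ℝ),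
            (1 - Real.exp (-(r ^ β)⁻¹ * t)) / (t * max (t ^ γ₁) (t ^ γ₂))) ∧
        (∫ t in Ioi (0 : ℝ),
            (1 - Real.exp (-(r ^ β)⁻¹ * t)) / (t * max (t ^ γ₁) (t ^ γ₂))) ≤
          C * min (r ^ (-(γ₁ * β))) (r ^ (-β))) ∧
    (∃ C : ℝ, 1 ≤ C ∧ ∀ r : ℝ, 0 < r →
        C⁻¹ * min (r ^ (-(γ₁ * β))) (r ^ (-(γ₂ * β))) ≤
          (max (r ^ (γ₁ * β)) (r ^ (γ₂ * β)))⁻¹ ∧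
        (max (r ^ (γ₁ * β)) (r ^ (γ₂ * β)))⁻¹ ≤
          C * min (r ^ (-(γ₁ * β))) (r ^ (-(γ₂ * β)))) ∧
    ¬ (∃ C : ℝ, 1 ≤ C ∧ ∀ r : ℝ, 0 < r →
        C⁻¹ * (max (r ^ (γ₁ * β)) (r ^ (γ₂ * β)))⁻¹ ≤
          (∫ t in Ioi (0 : ℝ),
            (1 - Real.exp (-(r ^ β)⁻¹ * t)) / (t * max (t ^ γ₁) (t ^ γ₂))) ∧
        (∫ t in Ioi (0 : ℝ),
            (1 - Real.exp (-(r ^ β)⁻¹ * t)) / (t * max (t ^ γ₁) (t ^ γ₂))) ≤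
          C * (max (r ^ (γ₁ * β)) (r ^ (γ₂ * β)))⁻¹) := by
  obtain ⟨C₁, hC₁, hphi⟩ := phiBar_comparable hγ₁ hγ₂
  have hφ : ∀ r : ℝ, 0 < r →
      C₁⁻¹ * min (r ^ (-(γ₁ * β))) (r ^ (-β)) ≤ phiBar γ₁ γ₂ (r ^ β)⁻¹ ∧
        phiBar γ₁ γ₂ (r ^ β)⁻¹ ≤ C₁ * min (r ^ (-(γ₁ * β))) (r ^ (-β)) := by
    intro r hr
    rw [rpow_neg hr.le, rpow_neg hr.le, mul_comm γ₁ β, rpow_mul hr.le,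
      ← inv_rpow (rpow_nonneg hr.le β)]
    exact hphi _ (inv_pos.2 (rpow_pos_of_pos hr β))
  refine ⟨⟨C₁, hC₁, hφ⟩, ⟨1, le_rfl, fun r hr ↦ ?_⟩, ?_⟩
  · rw [inv_max_rpow_eq_min_rpow_neg hr, inv_one, one_mul]
    exact ⟨le_rfl, le_rfl⟩
  · rintro ⟨C, hC, hψ⟩
    have hβγ : β < γ₂ * β := by nlinarith
    obtain ⟨r, hr1, hr⟩ := exists_mul_rpow_neg_lt_rpow_neg hβγ (C₁ * C)
    have hr0 : 0 < r := one_pos.trans_le hr1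
    have hmin : min (r ^ (-(γ₁ * β))) (r ^ (-β)) = r ^ (-β) :=
      min_eq_right (rpow_le_rpow_of_exponent_le hr1 (by nlinarith [hγ₁.2]))
    refine hr.not_ge ?_
    calc r ^ (-β) = C₁ * (C₁⁻¹ * min (r ^ (-(γ₁ * β))) (r ^ (-β))) := by
          rw [hmin]; field_simp
      _ ≤ C₁ * (C * (max (r ^ (γ₁ * β)) (r ^ (γ₂ * β)))⁻¹) :=
          mul_le_mul_of_nonneg_left ((hφ r hr0).1.trans (hψ r hr0).2) (by linarith)
      _ ≤ C₁ * C * r ^ (-(γ₂ * β)) := by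
          rw [inv_max_rpow_eq_min_rpow_neg hr0, mul_assoc]; gcongr; exact min_le_right _ _
end
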